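/- Let 0 ≤ s < r < 1, λ, μ ∈ 𝔻, u₀ = s/r, and let g(z) = T_{u₀}(T_{-r}(z)·T_{λ}(T_{-r}(z)·T_{μ}(α·T_{-r}(z)))) for some α ∈ closure(𝔻), where T_a(z) = (z+a)/(1+conj(a)z). Then g(r) = s/r and g'(r) = ((r² - s²)/(r²(1 - r²)))·λ. -/

import Mathlib

/-- The Möbius transformation `T_a(z) = (z+a)/(1 + conj a · z)`. -/
noncomputable def T (a z : ℂ) : ℂ := (z + a) / (1 + (starRingEnd ℂ) a * z)

/-! Since `T_{-r}(r) = 0`, the product rule discards the derivatives of all inner factors: the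
derivative of `T_{-r}(z) · T_λ(…)` at `r` is `T_{-r}'(r) · T_λ(0) = λ / (1 - r²)`, and the outer map
contributes `T_{u₀}'(0) = 1 - u₀²`. -/

open ComplexConjugate

lemma HasDerivAt.mul_of_eq_zero {𝕜 𝔸 : Type*} [NontriviallyNormedField 𝕜] [NormedRing 𝔸]
    [NormedAlgebra 𝕜 𝔸] {f g : 𝕜 → 𝔸} {f' : 𝔸} {x : 𝕜} (hf : HasDerivAt f f' x) (hfx : f x = 0)
    (hg : DifferentiableAt 𝕜 g x) :
    HasDerivAt (fun y => f y * g y) (f' * g x) x := by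
  simpa [hfx] using hf.fun_mul hg.hasDerivAt

lemma T_zero (a : ℂ) : T a 0 = a := by
  simp [T]

lemma T_neg_self (a : ℂ) : T (-a) a = 0 := by
  simp [T]

lemma hasDerivAt_T {a w : ℂ} (h : 1 + conj a * w ≠ 0) :
    HasDerivAt (T a) ((1 - conj a * a) / (1 + conj a * w) ^ 2) w := by
  have hnum : HasDerivAt (fun z : ℂ => z + a) 1 w := (hasDerivAt_id w).add_const a
  have hden : HasDerivAt (fun z : ℂ => 1 + conj a * z) (conj a) w := by
    simpa using ((hasDerivAt_id w).const_mul (conj a)).const_add 1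
  exact (hnum.fun_div hden h).congr_deriv (by ring)

lemma hasDerivAt_T_comp_of_eq_zero (a : ℂ) {f : ℂ → ℂ} {f' x : ℂ} (hf : HasDerivAt f f' x)
    (hfx : f x = 0) : HasDerivAt (fun y => T a (f y)) ((1 - conj a * a) * f') x := by
  have hT : HasDerivAt (T a) (1 - conj a * a) 0 := by simpa using hasDerivAt_T (a := a) (w := 0)
  exact hT.comp_of_eq x hf hfx.symm

lemma hasDerivAt_T_neg_ofReal {r : ℝ} (hr : 1 - (r : ℂ) ^ 2 ≠ 0) :
    HasDerivAt (T (-(r : ℂ))) (1 - (r : ℂ) ^ 2)⁻¹ r := by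
  convert hasDerivAt_T (a := -(r : ℂ)) (w := r) (by simpa [← sq, ← sub_eq_add_neg] using hr)
    using 1
  rw [map_neg, Complex.conj_ofReal, neg_mul_neg, neg_mul, ← sub_eq_add_neg, ← sq]
  field_simp

theorem extremal_first_deriv_general (r s : ℝ) (lam mu alpha : ℂ)
    (hs : 0 ≤ s) (hsr : s < r) (hr : r < 1)
    (g : ℂ → ℂ)
    (hg : g = fun z =>
      T ((s / r : ℝ) : ℂ)
        (T (-(r : ℂ)) z * T lam (T (-(r : ℂ)) z * T mu (alpha * T (-(r : ℂ)) z)))) :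
    g (r : ℂ) = (s / r : ℂ) ∧
    deriv g (r : ℂ) = (((r ^ 2 - s ^ 2) / (r ^ 2 * (1 - r ^ 2)) : ℝ) : ℂ) * lam := by
  have hr0 : 0 < r := hs.trans_lt hsr
  have hr1 : 1 - (r : ℂ) ^ 2 ≠ 0 := by exact_mod_cast (by nlinarith : (0 : ℝ) < 1 - r ^ 2).ne'
  have hA := hasDerivAt_T_neg_ofReal hr1
  have hA0 : T (-(r : ℂ)) r = 0 := T_neg_self _
  have hTmu := hasDerivAt_T_comp_of_eq_zero mu (hA.const_mul alpha) (by simp [hA0])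
  have hTlam := hasDerivAt_T_comp_of_eq_zero lam (hA.mul_of_eq_zero hA0 hTmu.differentiableAt)
    (by simp [hA0])
  have hg' := hasDerivAt_T_comp_of_eq_zero ((s / r : ℝ) : ℂ)
    (hA.mul_of_eq_zero hA0 hTlam.differentiableAt) (by simp [hA0])
  subst hg
  refine ⟨by simp [hA0, T_zero], ?_⟩
  rw [hg'.deriv]
  simp only [hA0, zero_mul, T_zero, Complex.conj_ofReal]
  have hr0' : (r : ℂ) ≠ 0 := by exact_mod_cast hr0.ne'
  push_cast
  field_simp

/-- First-derivative computation for the extremal function of the third order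
Dieudonné Lemma. -/
theorem extremal_first_deriv (r s : ℝ) (lam mu alpha : ℂ)
    (hs : 0 ≤ s) (hsr : s < r) (hr : r < 1)
    (hlam : ‖lam‖ < 1) (hmu : ‖mu‖ < 1)
    (halpha : ‖alpha‖ ≤ 1)
    (g : ℂ → ℂ)
    (hg : g = fun z =>
      T ((s / r : ℝ) : ℂ)
        (T (-(r : ℂ)) z * T lam (T (-(r : ℂ)) z * T mu (alpha * T (-(r : ℂ)) z)))) :
    g (r : ℂ) = (s / r : ℂ) ∧
    deriv g (r : ℂ) = (((r ^ 2 - s ^ 2) / (r ^ 2 * (1 - r ^ 2)) : ℝ) : ℂ) * lam :=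
  extremal_first_deriv_general r s lam mu alpha hs hsr hr g hg
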